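/- arXiv:1712.00521 — 2 statements merged into one kernel-verified Lean document; each statement's English description precedes it below -/
import Mathlib

section
/- Let F : C ⇄ D : G be an adjunction between categories where G reflects isomorphisms, and suppose C is generated under colimits by a set E of objects (the smallest full subcategory of C containing E and closed under colimits is C itself). Then D is generated under colimits by the image F(E), provided G preserves colimits of the relevant shape. -/
open CategoryTheory CategoryTheory.Limits

universe v u₁ u₂

/-- Let `F ⊣ G` be an adjunction between cocomplete categories such that `G`
reflects isomorphisms and preserves (small) colimits.  If a set `E` of objects
generates `C` under colimits (the only full subcategory of `C` containing `E`,
closed under isomorphisms and small colimits, is `C` itself), then the image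
`F(E)` generates `D` under colimits. -/
theorem generators_transfer_along_adjunction
    {C : Type u₁} {D : Type u₂} [Category.{v} C] [Category.{v} D]
    [HasColimits C] [HasColimits D]
    (F : C ⥤ D) (G : D ⥤ C) (adj : F ⊣ G)
    [G.ReflectsIsomorphisms] [PreservesColimits G]
    (E : Set C)
    (hE : ∀ P : Set C,
      (∀ X ∈ E, X ∈ P) →
      (∀ X Y : C, (X ≅ Y) → X ∈ P → Y ∈ P) →
      (∀ (J : Type v) (_ : SmallCategory J) (K : J ⥤ C) (c : Cocone K),
        IsColimit c → (∀ j, K.obj j ∈ P) → c.pt ∈ P) →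
      ∀ X : C, X ∈ P) :
    ∀ P : Set D,
      (∀ X ∈ E, F.obj X ∈ P) →
      (∀ X Y : D, (X ≅ Y) → X ∈ P → Y ∈ P) →
      (∀ (J : Type v) (_ : SmallCategory J) (K : J ⥤ D) (c : Cocone K),
        IsColimit c → (∀ j, K.obj j ∈ P) → c.pt ∈ P) →
      ∀ X : D, X ∈ P := by
  intro P hEP hisoP hcolimP X
  haveI : PreservesColimits F := adj.leftAdjoint_preservesColimits
  -- Step 1: `F.obj Y ∈ P` for every `Y : C`.
  have hF : ∀ Y : C, F.obj Y ∈ P := by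
    refine hE (F.obj ⁻¹' P) hEP ?_ ?_
    · intro A B e hA
      exact hisoP _ _ (F.mapIso e) hA
    · intro J _ K c hc hKj
      exact hcolimP J _ (K ⋙ F) (F.mapCocone c)
        (isColimitOfPreserves F hc) hKj
  -- Step 2: `X` is the coequalizer of a parallel pair of `F`-images.
  let f : F.obj (G.obj (F.obj (G.obj X))) ⟶ F.obj (G.obj X) :=
    F.map (G.map (adj.counit.app X))
  let g : F.obj (G.obj (F.obj (G.obj X))) ⟶ F.obj (G.obj X) :=
    adj.counit.app (F.obj (G.obj X))
  haveI : ReflectsColimitsOfShape WalkingParallelPair G := by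
    haveI : PreservesColimitsOfShape WalkingParallelPair G :=
      preservesColimitsOfShape_of_equiv
        (ULiftHomULiftCategory.equiv.{v, v} WalkingParallelPair).symm G
    exact reflectsColimitsOfShape_of_reflectsIsomorphisms
  have hc : IsColimit (Monad.MonadicityInternal.counitCofork adj X) :=
    Monad.MonadicityInternal.counitCoequalizerOfReflectsCoequalizer adj X
  -- reshape over a `Type v` small category
  let e := (ULiftHomULiftCategory.equiv.{v, v} WalkingParallelPair).symm
  have hc' := hc.whiskerEquivalence e
  have := hcolimP (ULiftHom.{v} (ULift.{v} WalkingParallelPair)) inferInstance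
    (e.functor ⋙ parallelPair f g)
    ((Monad.MonadicityInternal.counitCofork adj X).whisker e.functor) hc' ?_
  · exact this
  · rintro ⟨⟨_ | _⟩⟩ <;> exact hF _
end

section
/- Let D be a category, C ⊆ D a full subcategory whose inclusion ι admits a right adjoint G : D → C, and suppose the composite ι ∘ G : D → D admits a left adjoint T : D → D. Then for every object X of D, the object T(X) lies in C (up to isomorphism), and the induced functor F : D → C is left adjoint to ι. -/
/-!
Transposing along `T ⊣ G ⋙ ι` turns a section of `ιG(ε_{TX})` (which exists by a triangle
identity) into a section of `ε_{TX}`; a split-epi counit of a coreflection is invertible, so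
`TX ≅ ιG(TX)`. Hence `T ≅ (T ⋙ G) ⋙ ι`, and `T ⊣ G ⋙ ι` restricts along the fully faithful `ι`
to `T ⋙ G ⊣ ι`.
-/

open CategoryTheory

namespace CategoryTheory.Adjunction

variable {C D : Type*} [Category C] [Category D] {L : C ⥤ D} {R : D ⥤ C}

instance isSplitEpi_map_counit_app (adj : L ⊣ R) (Y : D) : IsSplitEpi (R.map (adj.counit.app Y)) :=
  .mk' ⟨adj.unit.app (R.obj Y), adj.right_triangle_components Y⟩

lemma isSplitEpi_of_isSplitEpi_map {Y : D} {X : C} (adj : L ⊣ R) (f : Y ⟶ L.obj X)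
    [IsSplitEpi (R.map f)] : IsSplitEpi f :=
  .mk' ⟨(adj.homEquiv _ _).symm (adj.unit.app X ≫ section_ (R.map f)), by
    rw [← homEquiv_naturality_right_symm, Category.assoc, IsSplitEpi.id, Category.comp_id,
      ← homEquiv_id, Equiv.symm_apply_apply]⟩

lemma mem_essImage_of_adjunction_comp {ι : C ⥤ D} [ι.Full] [ι.Faithful] {G : D ⥤ C}
    (adjG : ι ⊣ G) {T : D ⥤ D} (adjT : T ⊣ G ⋙ ι) (X : D) : ι.essImage (T.obj X) := by
  let : Coreflective ι := ⟨G, adjG⟩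
  have : IsSplitEpi ((G ⋙ ι).map (adjG.counit.app (T.obj X))) :=
    inferInstanceAs (IsSplitEpi (ι.map _))
  exact @mem_essImage_of_counit_isSplitEpi _ _ _ _ ι _ _
    (adjT.isSplitEpi_of_isSplitEpi_map (adjG.counit.app (T.obj X)))

noncomputable def compCoreflectorAdjunction {ι : C ⥤ D} [ι.Full] [ι.Faithful] {G : D ⥤ C}
    (adjG : ι ⊣ G) {T : D ⥤ D} (adjT : T ⊣ G ⋙ ι) : T ⋙ G ⊣ ι :=
  have (X : D) : IsIso ((Functor.whiskerLeft T adjG.counit).app X) :=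
    adjG.isIso_counit_app_iff_mem_essImage.2 (mem_essImage_of_adjunction_comp adjG adjT X)
  have := NatIso.isIso_of_isIso_app (Functor.whiskerLeft T adjG.counit)
  adjT.restrictFullyFaithful (Functor.FullyFaithful.id D) (.ofFullyFaithful ι)
    (T.leftUnitor ≪≫ (asIso (Functor.whiskerLeft T adjG.counit)).symm)
    (Functor.isoWhiskerRight (asIso adjG.unit).symm ι ≪≫ ι.leftUnitor ≪≫ ι.rightUnitor.symm)

end CategoryTheory.Adjunction

/-- Let `ι : C ⥤ D` be a fully faithful inclusion admitting a right adjoint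
`G`, and suppose the composite `ι ∘ G : D ⥤ D` admits a left adjoint `T`.
Then every `T(X)` lies in the (essential image of the) subcategory `C`, and
`ι` admits a left adjoint `F : D ⥤ C`. -/
theorem coreflective_left_adjoint
    {C D : Type*} [Category C] [Category D]
    (ι : C ⥤ D) [ι.Full] [ι.Faithful]
    (G : D ⥤ C) (adjG : ι ⊣ G)
    (T : D ⥤ D) (adjT : T ⊣ G ⋙ ι) :
    (∀ X : D, ∃ Y : C, Nonempty (T.obj X ≅ ι.obj Y)) ∧
    ∃ F : D ⥤ C, Nonempty (F ⊣ ι) :=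
  ⟨fun X => ⟨_, ⟨(adjG.mem_essImage_of_adjunction_comp adjT X).getIso.symm⟩⟩,
    T ⋙ G, ⟨adjG.compCoreflectorAdjunction adjT⟩⟩
end
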